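/- For every fixed r ∈ (0,1) there exists an integer N₀ such that for all N ≥ N₀, all α > 0 and all β with 0 ≤ β ≤ α/(N-1), the VSA attention entropy is strictly smaller than the SSA attention entropy: H(P_{N,r}) < H(Q_{N,α,β}). -/

import Mathlib

/-!
Both entropies are controlled through pointwise bounds on `-log p`. The truncated geometric
weights satisfy `(1 - r) r^Δ ≤ P(Δ) ≤ r^Δ`, so its entropy is at most
`-log (1 - r) + (-log r) · E[Δ] ≤ -log (1 - r) + (-log r) · r / (1 - r)²`, a bound independent
of `N`. The linear-decay weights never exceed `2 / N`, so its entropy is at least `log (N / 2)`,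
which eventually exceeds any constant.
-/

open Finset Real Filter

noncomputable section

def entropy (N : ℕ) (p : ℕ → ℝ) : ℝ :=
  -∑ Δ ∈ range N, p Δ * log (p Δ)

def truncGeom (N : ℕ) (r : ℝ) (Δ : ℕ) : ℝ :=
  (1 - r) * r ^ Δ / (1 - r ^ N)

def linearDecay (N : ℕ) (α β : ℝ) (Δ : ℕ) : ℝ :=
  (α - β * Δ) / (α * N - β * N * ((N : ℝ) - 1) / 2)

end

section Entropy

variable {N : ℕ} {p f : ℕ → ℝ}

theorem entropy_le_sum_mul (hp : ∀ Δ ∈ range N, 0 ≤ p Δ)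
    (hf : ∀ Δ ∈ range N, 0 < p Δ → -log (p Δ) ≤ f Δ) :
    entropy N p ≤ ∑ Δ ∈ range N, p Δ * f Δ := by
  rw [entropy, ← sum_neg_distrib]
  refine sum_le_sum fun Δ hΔ => ?_
  rcases (hp Δ hΔ).eq_or_lt with h0 | hpos
  · simp [← h0]
  · rw [← mul_neg]
    exact mul_le_mul_of_nonneg_left (hf Δ hΔ hpos) hpos.le

theorem sum_mul_le_entropy (hp : ∀ Δ ∈ range N, 0 ≤ p Δ)
    (hf : ∀ Δ ∈ range N, 0 < p Δ → f Δ ≤ -log (p Δ)) :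
    ∑ Δ ∈ range N, p Δ * f Δ ≤ entropy N p := by
  rw [entropy, ← sum_neg_distrib]
  refine sum_le_sum fun Δ hΔ => ?_
  rcases (hp Δ hΔ).eq_or_lt with h0 | hpos
  · simp [← h0]
  · rw [← mul_neg]
    exact mul_le_mul_of_nonneg_left (hf Δ hΔ hpos) hpos.le

theorem neg_log_le_entropy_of_le {M : ℝ} (hp : ∀ Δ ∈ range N, 0 ≤ p Δ)
    (hp_sum : ∑ Δ ∈ range N, p Δ = 1) (hM : ∀ Δ ∈ range N, p Δ ≤ M) :
    -log M ≤ entropy N p := by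
  calc -log M = ∑ Δ ∈ range N, p Δ * -log M := by rw [← sum_mul, hp_sum, one_mul]
    _ ≤ entropy N p :=
      sum_mul_le_entropy hp fun Δ hΔ hpos => neg_le_neg (log_le_log hpos (hM Δ hΔ))

end Entropy

section TruncGeom

variable {N : ℕ} {r : ℝ}

theorem sum_truncGeom (hr0 : 0 ≤ r) (hr1 : r < 1) (hN : N ≠ 0) :
    ∑ Δ ∈ range N, truncGeom N r Δ = 1 := by
  have h1r : r - 1 ≠ 0 := (sub_neg.mpr hr1).ne
  have h1rN : 1 - r ^ N ≠ 0 := (sub_pos.mpr (pow_lt_one₀ hr0 hr1 hN)).ne'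
  simp only [truncGeom]
  rw [← sum_div, ← mul_sum, geom_sum_eq hr1.ne, div_eq_one_iff_eq h1rN]
  field_simp
  ring

theorem mul_pow_le_truncGeom (hr0 : 0 ≤ r) (hr1 : r < 1) (hN : N ≠ 0) (Δ : ℕ) :
    (1 - r) * r ^ Δ ≤ truncGeom N r Δ :=
  le_div_self (by have := sub_pos.mpr hr1; positivity)
    (sub_pos.mpr (pow_lt_one₀ hr0 hr1 hN)) (by simpa using pow_nonneg hr0 N)

theorem truncGeom_le_pow (hr0 : 0 ≤ r) (hr1 : r < 1) (hN : N ≠ 0) (Δ : ℕ) :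
    truncGeom N r Δ ≤ r ^ Δ := by
  have hrN : r ^ N ≤ r := pow_le_of_le_one hr0 hr1.le hN
  rw [truncGeom, div_le_iff₀ (sub_pos.mpr (pow_lt_one₀ hr0 hr1 hN)), mul_comm]
  exact mul_le_mul_of_nonneg_left (by linarith) (pow_nonneg hr0 Δ)

theorem entropy_truncGeom_le (hr0 : 0 < r) (hr1 : r < 1) (hN : N ≠ 0) :
    entropy N (truncGeom N r) ≤ -log (1 - r) + -log r * (r / (1 - r) ^ 2) := by
  have h1r : 0 < 1 - r := sub_pos.mpr hr1
  have hlogr : 0 ≤ -log r := neg_nonneg.mpr (log_nonpos hr0.le hr1.le)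
  have hp : ∀ Δ ∈ range N, 0 ≤ truncGeom N r Δ := fun Δ _ =>
    le_trans (by positivity) (mul_pow_le_truncGeom hr0.le hr1 hN Δ)
  have hmean : ∑ Δ ∈ range N, truncGeom N r Δ * Δ ≤ r / (1 - r) ^ 2 :=
    calc ∑ Δ ∈ range N, truncGeom N r Δ * Δ ≤ ∑ Δ ∈ range N, (Δ : ℝ) * r ^ Δ :=
          sum_le_sum fun Δ _ => by
            rw [mul_comm]
            exact mul_le_mul_of_nonneg_left (truncGeom_le_pow hr0.le hr1 hN Δ) Δ.cast_nonneg
      _ ≤ r / (1 - r) ^ 2 :=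
          sum_le_hasSum _ (fun Δ _ => by positivity) <|
            hasSum_coe_mul_geometric_of_norm_lt_one (by rwa [norm_of_nonneg hr0.le])
  calc entropy N (truncGeom N r)
      ≤ ∑ Δ ∈ range N, truncGeom N r Δ * (-log (1 - r) + Δ * -log r) := by
        refine entropy_le_sum_mul hp fun Δ _ _ => ?_
        have := log_le_log (by positivity) (mul_pow_le_truncGeom hr0.le hr1 hN Δ)
        rw [log_mul h1r.ne' (by positivity), log_pow] at this
        linarith
    _ = -log (1 - r) * ∑ Δ ∈ range N, truncGeom N r Δ +
          -log r * ∑ Δ ∈ range N, truncGeom N r Δ * Δ := by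
        rw [mul_sum, mul_sum, ← sum_add_distrib]
        exact sum_congr rfl fun _ _ => by ring
    _ = -log (1 - r) + -log r * ∑ Δ ∈ range N, truncGeom N r Δ * Δ := by
        rw [sum_truncGeom hr0.le hr1 hN, mul_one]
    _ ≤ -log (1 - r) + -log r * (r / (1 - r) ^ 2) := by gcongr

end TruncGeom

section LinearDecay

theorem sum_range_natCast (N : ℕ) :
    ∑ i ∈ range N, (i : ℝ) = N * ((N : ℝ) - 1) / 2 := by
  induction N with
  | zero => simp
  | succ n ih =>
    rw [sum_range_succ, ih]
    push_cast
    ring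

variable {N : ℕ} {α β : ℝ}

theorem half_mul_le_linearDecay_denom (hβ : β * ((N : ℝ) - 1) ≤ α) :
    N * α / 2 ≤ α * N - β * N * ((N : ℝ) - 1) / 2 := by
  nlinarith [mul_le_mul_of_nonneg_left hβ N.cast_nonneg]

theorem sum_linearDecay (hN : N ≠ 0) (hα : 0 < α) (hβ : β * ((N : ℝ) - 1) ≤ α) :
    ∑ Δ ∈ range N, linearDecay N α β Δ = 1 := by
  have hS : 0 < α * N - β * N * ((N : ℝ) - 1) / 2 :=
    lt_of_lt_of_le (by positivity) (half_mul_le_linearDecay_denom hβ)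
  simp only [linearDecay]
  rw [← sum_div, div_eq_one_iff_eq hS.ne', sum_sub_distrib, ← mul_sum,
    sum_range_natCast, sum_const, card_range, nsmul_eq_mul]
  ring

theorem linearDecay_nonneg (hN : N ≠ 0) (hα : 0 < α) (hβ0 : 0 ≤ β)
    (hβ : β * ((N : ℝ) - 1) ≤ α) {Δ : ℕ} (hΔ : Δ ∈ range N) :
    0 ≤ linearDecay N α β Δ := by
  have hΔN : (Δ : ℝ) ≤ N - 1 := by
    have : ((Δ + 1 : ℕ) : ℝ) ≤ N := by exact_mod_cast mem_range.mp hΔ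
    push_cast at this
    linarith
  have hS : 0 < α * N - β * N * ((N : ℝ) - 1) / 2 :=
    lt_of_lt_of_le (by positivity) (half_mul_le_linearDecay_denom hβ)
  exact div_nonneg (by nlinarith [mul_le_mul_of_nonneg_left hΔN hβ0]) hS.le

theorem linearDecay_le (hN : N ≠ 0) (hα : 0 < α) (hβ0 : 0 ≤ β)
    (hβ : β * ((N : ℝ) - 1) ≤ α) (Δ : ℕ) :
    linearDecay N α β Δ ≤ 2 / N := by
  have hNα : 0 < N * α / 2 := by positivity
  calc linearDecay N α β Δ ≤ α / (N * α / 2) :=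
        div_le_div₀ hα.le (by nlinarith [mul_nonneg hβ0 Δ.cast_nonneg]) hNα
          (half_mul_le_linearDecay_denom hβ)
    _ = 2 / N := by field_simp

theorem log_half_le_entropy_linearDecay (hN : N ≠ 0) (hα : 0 < α) (hβ0 : 0 ≤ β)
    (hβ : β * ((N : ℝ) - 1) ≤ α) :
    log (N / 2) ≤ entropy N (linearDecay N α β) := by
  rw [← inv_div, log_inv]
  exact neg_log_le_entropy_of_le (fun Δ hΔ => linearDecay_nonneg hN hα hβ0 hβ hΔ)
    (sum_linearDecay hN hα hβ) fun Δ _ => linearDecay_le hN hα hβ0 hβ Δ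

end LinearDecay

/-- For every fixed `r ∈ (0,1)` there is an `N₀` such that for all
`N ≥ N₀`, all `α > 0` and all `β ∈ [0, α/(N-1)]`, the VSA attention entropy is strictly
smaller than the SSA attention entropy: `H(P_{N,r}) < H(Q_{N,α,β})`. -/
theorem vsa_entropy_lt_ssa (r : ℝ) (hr : r ∈ Set.Ioo (0 : ℝ) 1) :
    ∃ N₀ : ℕ, ∀ N : ℕ, N₀ ≤ N →
      ∀ α β : ℝ, 0 < α → 0 ≤ β → β ≤ α / ((N : ℝ) - 1) →
        -∑ Δ ∈ Finset.range N,
            ((1 - r) * r ^ Δ / (1 - r ^ N)) * Real.log ((1 - r) * r ^ Δ / (1 - r ^ N)) <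
          -∑ Δ ∈ Finset.range N,
            ((α - β * Δ) / (α * N - β * N * ((N : ℝ) - 1) / 2)) *
              Real.log ((α - β * Δ) / (α * N - β * N * ((N : ℝ) - 1) / 2)) := by
  obtain ⟨hr0, hr1⟩ := hr
  have hlog_large : ∀ᶠ N : ℕ in atTop,
      -log (1 - r) + -log r * (r / (1 - r) ^ 2) < log (N / 2) :=
    (tendsto_log_atTop.comp (tendsto_natCast_atTop_atTop.atTop_div_const two_pos)).eventually
      (eventually_gt_atTop _)
  obtain ⟨N₀, hN₀⟩ := eventually_atTop.mp (hlog_large.and (eventually_ge_atTop 2))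
  refine ⟨N₀, fun N hN α β hα hβ0 hβ => ?_⟩
  obtain ⟨hC, hN2⟩ := hN₀ N hN
  have hN1 : (0 : ℝ) < N - 1 := by
    have : (2 : ℝ) ≤ N := by exact_mod_cast hN2
    linarith
  have hN : N ≠ 0 := by omega
  show entropy N (truncGeom N r) < entropy N (linearDecay N α β)
  calc entropy N (truncGeom N r) ≤ -log (1 - r) + -log r * (r / (1 - r) ^ 2) :=
        entropy_truncGeom_le hr0 hr1 hN
    _ < log (N / 2) := hC
    _ ≤ entropy N (linearDecay N α β) :=
        log_half_le_entropy_linearDecay hN hα hβ0 ((le_div_iff₀ hN1).mp hβ)
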